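/- arXiv:2511.23123 — 2 statements merged into one kernel-verified Lean document; each statement's English description precedes it below -/
import Mathlib

section
/- For every real number t with 0 ≤ t < 1, one has e^{-t²/3} ≥ sin²(t)/t² ≥ e^{-((π²+5)/(3(π²-1)))·t²}, where at t = 0 the middle quantity is interpreted as 1. -/
open Real

theorem sin_sq_div_sq_bounds (t : ℝ) (ht0 : 0 ≤ t) (ht1 : t < 1) :
    Real.exp (-(t ^ 2 / 3)) ≥ (if t = 0 then 1 else Real.sin t ^ 2 / t ^ 2) ∧
    (if t = 0 then 1 else Real.sin t ^ 2 / t ^ 2) ≥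
      Real.exp (-((π ^ 2 + 5) / (3 * (π ^ 2 - 1))) * t ^ 2) := by
  have hπ : (3 : ℝ) < π := Real.pi_gt_three
  have hπ1 : (1 : ℝ) < π ^ 2 := by nlinarith
  rcases eq_or_lt_of_le ht0 with h0 | h0
  · simp [← h0]
  rw [if_neg (ne_of_gt h0)]
  -- setup
  set P : ℕ → ℝ := fun n => ∏ j ∈ Finset.range n, ((1 : ℝ) - t ^ 2 / (π ^ 2 * ((j : ℝ) + 1) ^ 2))
  set S : ℕ → ℝ := fun n => ∑ j ∈ Finset.range n, (1 : ℝ) / ((j : ℝ) + 1) ^ 2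
  have hj : ∀ j : ℕ, (1 : ℝ) ≤ ((j : ℝ) + 1) ^ 2 := by
    intro j
    nlinarith [Nat.cast_nonneg (α := ℝ) j]
  have ht2 : t ^ 2 < 1 := by nlinarith
  have hfac_pos : ∀ j : ℕ, (0 : ℝ) < 1 - t ^ 2 / (π ^ 2 * ((j : ℝ) + 1) ^ 2) := by
    intro j
    have h1 := hj j
    have hd : (0 : ℝ) < π ^ 2 * ((j : ℝ) + 1) ^ 2 := by positivity
    rw [sub_pos, div_lt_one hd]
    nlinarith
  -- limit of P is sin t / t
  have hlim : Filter.Tendsto P Filter.atTop (nhds (Real.sin t / t)) := by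
    have h := Real.tendsto_euler_sin_prod (t / π)
    have hπ0 : (π : ℝ) ≠ 0 := by positivity
    have heq : (fun n : ℕ => π * (t / π) *
        ∏ j ∈ Finset.range n, ((1 : ℝ) - (t / π) ^ 2 / ((j : ℝ) + 1) ^ 2))
        = fun n => t * P n := by
      funext n
      rw [mul_div_cancel₀ _ hπ0]
      congr 1
      apply Finset.prod_congr rfl
      intro j _
      rw [div_pow, div_div]
    rw [heq, mul_div_cancel₀ _ hπ0] at h
    have := h.const_mul (1 / t)
    simp only [← mul_assoc, one_div_mul_cancel (ne_of_gt h0), one_mul] at this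
    convert this using 2
    ring
  -- upper bound on partial products
  have hU : ∀ n, P n ≤ Real.exp (-(t ^ 2 / π ^ 2) * S n) := by
    intro n
    have : ∀ j ∈ Finset.range n, (1 : ℝ) - t ^ 2 / (π ^ 2 * ((j : ℝ) + 1) ^ 2)
        ≤ Real.exp (-(t ^ 2 / π ^ 2) * ((1 : ℝ) / ((j : ℝ) + 1) ^ 2)) := by
      intro j _
      have h := Real.add_one_le_exp (-(t ^ 2 / (π ^ 2 * ((j : ℝ) + 1) ^ 2)))
      have heq : -(t ^ 2 / π ^ 2) * ((1 : ℝ) / ((j : ℝ) + 1) ^ 2)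
          = -(t ^ 2 / (π ^ 2 * ((j : ℝ) + 1) ^ 2)) := by
        field_simp
      rw [heq]
      linarith
    calc P n ≤ ∏ j ∈ Finset.range n,
          Real.exp (-(t ^ 2 / π ^ 2) * ((1 : ℝ) / ((j : ℝ) + 1) ^ 2)) := by
          apply Finset.prod_le_prod (fun j _ => le_of_lt (hfac_pos j)) this
      _ = Real.exp (-(t ^ 2 / π ^ 2) * S n) := by
          rw [← Real.exp_sum, ← Finset.mul_sum]
  -- lower bound on partial products
  have hL : ∀ n, Real.exp (-(t ^ 2 / (π ^ 2 - 1)) * S n) ≤ P n := by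
    intro n
    have key : ∀ j ∈ Finset.range n,
        Real.exp (-(t ^ 2 / (π ^ 2 - 1)) * ((1 : ℝ) / ((j : ℝ) + 1) ^ 2))
        ≤ (1 : ℝ) - t ^ 2 / (π ^ 2 * ((j : ℝ) + 1) ^ 2) := by
      intro j _
      have h1 := hj j
      set b : ℝ := t ^ 2 / (π ^ 2 * ((j : ℝ) + 1) ^ 2 - t ^ 2) with hb
      have hden : (0 : ℝ) < π ^ 2 * ((j : ℝ) + 1) ^ 2 - t ^ 2 := by nlinarith
      have hb0 : 0 ≤ b := by positivity
      have step1 : Real.exp (-b) ≤ 1 - t ^ 2 / (π ^ 2 * ((j : ℝ) + 1) ^ 2) := by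
        have h2 : 1 + b ≤ Real.exp b := by linarith [Real.add_one_le_exp b]
        have h3 : Real.exp (-b) ≤ 1 / (1 + b) := by
          rw [Real.exp_neg, inv_eq_one_div]
          exact one_div_le_one_div_of_le (by linarith) h2
        have h4 : (1 : ℝ) / (1 + b) = 1 - t ^ 2 / (π ^ 2 * ((j : ℝ) + 1) ^ 2) := by
          rw [hb]
          have hd2 : (0 : ℝ) < π ^ 2 * ((j : ℝ) + 1) ^ 2 := by positivity
          field_simp
          ring
        rw [h4] at h3; exact h3
      refine le_trans (Real.exp_le_exp.2 ?_) step1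
      have hc : -(t ^ 2 / (π ^ 2 - 1)) * ((1 : ℝ) / ((j : ℝ) + 1) ^ 2)
          = -(t ^ 2 / ((π ^ 2 - 1) * ((j : ℝ) + 1) ^ 2)) := by field_simp
      rw [hc, hb, neg_le_neg_iff]
      apply div_le_div_of_nonneg_left (by positivity) (by nlinarith) (by nlinarith)
    calc Real.exp (-(t ^ 2 / (π ^ 2 - 1)) * S n)
        = ∏ j ∈ Finset.range n,
            Real.exp (-(t ^ 2 / (π ^ 2 - 1)) * ((1 : ℝ) / ((j : ℝ) + 1) ^ 2)) := by
          rw [← Real.exp_sum, ← Finset.mul_sum]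
      _ ≤ P n := Finset.prod_le_prod (fun j _ => (Real.exp_pos _).le) key
  -- partial sums facts
  have hSsum : HasSum (fun j : ℕ => (1 : ℝ) / ((j : ℝ) + 1) ^ 2) (π ^ 2 / 6) := by
    have h := hasSum_zeta_two
    have := (Function.Injective.hasSum_iff (f := fun n : ℕ => (1 : ℝ) / (n : ℝ) ^ 2)
      (Nat.succ_injective) ?_).2 h
    · convert this using 1
      funext j
      simp [Nat.succ_eq_add_one]
    · intro n hn
      simp only [Set.mem_range, not_exists] at hn
      have : n = 0 := by
        cases n with
        | zero => rfl
        | succ k => exact absurd rfl (hn k)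
      simp [this]
  have hSlim : Filter.Tendsto S Filter.atTop (nhds (π ^ 2 / 6)) :=
    hSsum.tendsto_sum_nat
  have hSle : ∀ n, S n ≤ π ^ 2 / 6 := by
    intro n
    exact sum_le_hasSum _ (fun j _ => by positivity) hSsum
  -- limits
  have hsin_pos : 0 < Real.sin t := Real.sin_pos_of_pos_of_lt_pi h0 (by linarith)
  have hq_pos : 0 < Real.sin t / t := div_pos hsin_pos h0
  have hUpper : Real.sin t / t ≤ Real.exp (-(t ^ 2 / 6)) := by
    have hlim2 : Filter.Tendsto (fun n => Real.exp (-(t ^ 2 / π ^ 2) * S n))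
        Filter.atTop (nhds (Real.exp (-(t ^ 2 / 6)))) := by
      have := (Real.continuous_exp.tendsto _).comp ((hSlim.const_mul (-(t ^ 2 / π ^ 2))))
      have hπ0 : π ≠ 0 := by positivity
      have e : -(t ^ 2 / π ^ 2) * (π ^ 2 / 6) = -(t ^ 2 / 6) := by
        rw [neg_mul, div_mul_div_comm, mul_comm (t ^ 2) (π ^ 2),
          mul_div_mul_left _ _ (pow_ne_zero 2 hπ0)]
      rw [e] at this
      exact this
    exact le_of_tendsto_of_tendsto' hlim hlim2 hU
  have hLower : Real.exp (-(t ^ 2 * π ^ 2 / (6 * (π ^ 2 - 1)))) ≤ Real.sin t / t := by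
    refine ge_of_tendsto' hlim (fun n => le_trans ?_ (hL n))
    rw [Real.exp_le_exp]
    have hcoef : 0 ≤ t ^ 2 / (π ^ 2 - 1) := div_nonneg (by positivity) (by nlinarith)
    have := mul_le_mul_of_nonneg_left (hSle n) hcoef
    have heq : t ^ 2 / (π ^ 2 - 1) * (π ^ 2 / 6) = t ^ 2 * π ^ 2 / (6 * (π ^ 2 - 1)) := by
      field_simp
    nlinarith
  constructor
  · -- upper bound
    have : Real.sin t ^ 2 / t ^ 2 = (Real.sin t / t) ^ 2 := by rw [div_pow]
    rw [ge_iff_le, this]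
    calc (Real.sin t / t) ^ 2 ≤ (Real.exp (-(t ^ 2 / 6))) ^ 2 := by
          apply pow_le_pow_left₀ hq_pos.le hUpper
      _ = Real.exp (-(t ^ 2 / 3)) := by
          rw [← Real.exp_nat_mul]; congr 1; ring
  · -- lower bound
    have : Real.sin t ^ 2 / t ^ 2 = (Real.sin t / t) ^ 2 := by rw [div_pow]
    rw [ge_iff_le, this]
    calc Real.exp (-((π ^ 2 + 5) / (3 * (π ^ 2 - 1))) * t ^ 2)
        ≤ Real.exp (-(t ^ 2 * π ^ 2 / (3 * (π ^ 2 - 1)))) := by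
          rw [Real.exp_le_exp, neg_mul, neg_le_neg_iff]
          have hpos : (0:ℝ) < 3 * (π ^ 2 - 1) := by nlinarith
          have heq2 : (π ^ 2 + 5) / (3 * (π ^ 2 - 1)) * t ^ 2
              = (π ^ 2 + 5) * t ^ 2 / (3 * (π ^ 2 - 1)) := by ring
          rw [heq2, div_le_div_iff₀ hpos hpos]
          nlinarith [mul_nonneg (sq_nonneg t) hpos.le]
      _ = (Real.exp (-(t ^ 2 * π ^ 2 / (6 * (π ^ 2 - 1))))) ^ 2 := by
          rw [← Real.exp_nat_mul]
          congr 1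
          have h6 : (π ^ 2 - 1) ≠ 0 := by nlinarith
          push_cast
          field_simp
          ring
      _ ≤ (Real.sin t / t) ^ 2 := by
          apply pow_le_pow_left₀ (Real.exp_pos _).le hLower
end

section
/- Let G be a group with no elements of order 2 and let H ≤ G be a malnormal subgroup (that is, gHg⁻¹ ∩ H = {1} for every g ∈ G \ H). If g ∈ G satisfies Hg = g⁻¹H (equivalently, the double cosets HgH and Hg⁻¹H coincide as sets and moreover Hg = g⁻¹H), then g ∈ H. -/
/-! From `g ∈ Hg = g⁻¹H` we get `g² ∈ H`. Since `g` commutes with `g²`, conjugation by `g` fixes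
`g²`, so if `g ∉ H` malnormality forces `g² = 1`, and then the absence of involutions gives
`g = 1 ∈ H`, a contradiction. -/

namespace Subgroup

variable {G : Type*} [Group G] {H : Subgroup G}

theorem sq_mem_of_coset_eq_inv_coset {g : G}
    (hcos : {x : G | ∃ h ∈ H, x = h * g} = {x : G | ∃ h ∈ H, x = g⁻¹ * h}) : g ^ 2 ∈ H := by
  have hg : g ∈ {x : G | ∃ h ∈ H, x = g⁻¹ * h} := hcos ▸ ⟨1, H.one_mem, (one_mul g).symm⟩
  obtain ⟨h, hh, hgh⟩ := hg
  rwa [pow_two, eq_inv_mul_iff_mul_eq.mp hgh]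

theorem eq_one_of_commute_of_notMem
    (hmal : ∀ g : G, g ∉ H → ∀ x ∈ H, g * x * g⁻¹ ∈ H → x = 1)
    {g x : G} (hg : g ∉ H) (hx : x ∈ H) (hcomm : Commute g x) : x = 1 :=
  hmal g hg x hx (by rwa [hcomm.eq, mul_inv_cancel_right])

theorem mem_of_sq_mem
    (hno2 : ∀ x : G, x ^ 2 = 1 → x = 1)
    (hmal : ∀ g : G, g ∉ H → ∀ x ∈ H, g * x * g⁻¹ ∈ H → x = 1)
    {g : G} (hsq : g ^ 2 ∈ H) : g ∈ H := by
  by_contra hg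
  have hg1 : g = 1 := hno2 g (eq_one_of_commute_of_notMem hmal hg hsq (Commute.self_pow g 2))
  exact hg (hg1 ▸ H.one_mem)

end Subgroup

theorem mem_of_coset_eq_inv_coset {G : Type*} [Group G] (H : Subgroup G)
    (hno2 : ∀ x : G, x ^ 2 = 1 → x = 1)
    (hmal : ∀ g : G, g ∉ H → ∀ x ∈ H, g * x * g⁻¹ ∈ H → x = 1)
    (g : G)
    (hcos : {x : G | ∃ h ∈ H, x = h * g} = {x : G | ∃ h ∈ H, x = g⁻¹ * h}) :
    g ∈ H :=
  Subgroup.mem_of_sq_mem hno2 hmal (Subgroup.sq_mem_of_coset_eq_inv_coset hcos)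
end
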